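/- arXiv:2403.03695 — 3 statements merged into one kernel-verified Lean document; each statement's English description precedes it below -/
import Mathlib

section
/- Let Q be a d×d matrix with nonnegative entries and real eigenvalues, and let r be a vector in R^d with all entries strictly positive. If the largest eigenvalue of Q is strictly greater than 1, then the linear system (I - Q) z = r admits no solution z with all entries nonnegative. -/
/-!
From `(1 - Q) z = r > 0` and `Q ≥ 0` we get `z > 0` and `Q z < z` entrywise. For an eigenpair
`(μ, v)` of `Q` the triangle inequality gives `‖μ‖ |v| ≤ Q |v|`. Taking the least `c` with
`|v| ≤ c z` and an index `i` where `|v i| = c z i`, we get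
`‖μ‖ |v i| ≤ (Q |v|) i ≤ c (Q z) i < c z i = |v i|`, so `μ.re ≤ ‖μ‖ < 1`.
-/

open Matrix

namespace Matrix

variable {n : Type*} [Fintype n]

theorem exists_mulVec_eq_smul_of_mem_spectrum {𝕜 : Type*} [DecidableEq n] [Field 𝕜]
    {A : Matrix n n 𝕜} {μ : 𝕜} (hμ : μ ∈ spectrum 𝕜 A) :
    ∃ v ≠ 0, A *ᵥ v = μ • v := by
  rw [← spectrum_toLin', ← Module.End.hasEigenvalue_iff_mem_spectrum] at hμ
  obtain ⟨v, hv, hv0⟩ := hμ.exists_hasEigenvector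
  exact ⟨v, hv0, by simpa using Module.End.mem_eigenspace_iff.mp hv⟩

variable {Q : Matrix n n ℝ}

theorem mulVec_mono_of_nonneg (hQ : ∀ i j, 0 ≤ Q i j) {u v : n → ℝ} (huv : u ≤ v) :
    Q *ᵥ u ≤ Q *ᵥ v :=
  fun i => dotProduct_le_dotProduct_of_nonneg_left huv (hQ i)

theorem norm_smul_norm_le_mulVec_norm (hQ : ∀ i j, 0 ≤ Q i j) {μ : ℂ} {v : n → ℂ}
    (hv : Q.map (algebraMap ℝ ℂ) *ᵥ v = μ • v) :
    ‖μ‖ • (fun i => ‖v i‖) ≤ Q *ᵥ fun i => ‖v i‖ := fun i =>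
  calc ‖μ‖ * ‖v i‖ = ‖∑ j, (Q i j : ℂ) * v j‖ := by
        rw [← norm_mul, show μ * v i = (μ • v) i from rfl, ← hv]; rfl
    _ ≤ ∑ j, ‖(Q i j : ℂ) * v j‖ := norm_sum_le _ _
    _ = (Q *ᵥ fun i => ‖v i‖) i := by
        simp [mulVec, dotProduct, Complex.norm_real, abs_of_nonneg (hQ i _)]

theorem lt_one_of_smul_le_mulVec (hQ : ∀ i j, 0 ≤ Q i j) {z w : n → ℝ} {ρ : ℝ}
    (hz : ∀ i, 0 < z i) (hQz : ∀ i, (Q *ᵥ z) i < z i) (hw : 0 ≤ w) (hw0 : w ≠ 0)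
    (hρ : ρ • w ≤ Q *ᵥ w) : ρ < 1 := by
  obtain ⟨j, hj⟩ := Function.ne_iff.mp hw0
  obtain ⟨i, -, hi⟩ := Finset.univ.exists_max_image (fun i => w i / z i) ⟨j, Finset.mem_univ j⟩
  set c := w i / z i
  have hwc : w ≤ c • z := fun k => (div_le_iff₀ (hz k)).mp (hi k (Finset.mem_univ k))
  have hc : 0 < c :=
    (div_pos ((hw j).lt_of_ne' hj) (hz j)).trans_le (hi j (Finset.mem_univ j))
  have hwi : w i = c * z i := (div_mul_cancel₀ _ (hz i).ne').symm
  have : ρ * w i < w i :=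
    calc ρ * w i ≤ (Q *ᵥ w) i := hρ i
      _ ≤ (Q *ᵥ (c • z)) i := mulVec_mono_of_nonneg hQ hwc i
      _ = c * (Q *ᵥ z) i := by rw [mulVec_smul]; rfl
      _ < w i := hwi ▸ mul_lt_mul_of_pos_left (hQz i) hc
  exact lt_of_mul_lt_mul_right (by linarith) (hwi ▸ (mul_pos hc (hz i)).le)

end Matrix

theorem stmt_1_general (d : ℕ) (Q : Matrix (Fin d) (Fin d) ℝ)
    (hQpos : ∀ i j, 0 ≤ Q i j)
    (htop : ∃ μ ∈ spectrum ℂ (Q.map (algebraMap ℝ ℂ)), 1 < μ.re)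
    (r : Fin d → ℝ) (hr : ∀ i, 0 < r i) :
    ¬ ∃ z : Fin d → ℝ, (∀ i, 0 ≤ z i) ∧
      ((1 : Matrix (Fin d) (Fin d) ℝ) - Q) *ᵥ z = r := by
  rintro ⟨z, hz, hsys⟩
  obtain ⟨μ, hμ, hμ_re⟩ := htop
  obtain ⟨v, hv0, hv⟩ := exists_mulVec_eq_smul_of_mem_spectrum hμ
  have hzr : ∀ i, z i - (Q *ᵥ z) i = r i := fun i => by
    simpa [sub_mulVec] using congrFun hsys i
  have hQz : ∀ i, (Q *ᵥ z) i < z i := fun i => by linarith [hzr i, hr i]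
  have hQz_nonneg : 0 ≤ Q *ᵥ z := by
    simpa using mulVec_mono_of_nonneg hQpos (show 0 ≤ z from hz)
  have hz_pos : ∀ i, 0 < z i := fun i => (hQz_nonneg i).trans_lt (hQz i)
  have hμ_lt : ‖μ‖ < 1 := lt_one_of_smul_le_mulVec hQpos hz_pos hQz
    (fun i => norm_nonneg (v i)) (fun h => hv0 (funext fun i => norm_eq_zero.mp (congrFun h i)))
    (norm_smul_norm_le_mulVec_norm hQpos hv)
  linarith [Complex.re_le_norm μ]

/-- If `Q` is a nonnegative matrix with real eigenvalues whose largest eigenvalue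
is strictly greater than 1, and `r` is entrywise positive, then `(I - Q) z = r`
has no entrywise nonnegative solution. -/
theorem stmt_1 (d : ℕ) (Q : Matrix (Fin d) (Fin d) ℝ)
    (hQpos : ∀ i j, 0 ≤ Q i j)
    (hreal : ∀ μ ∈ spectrum ℂ (Q.map (algebraMap ℝ ℂ)), μ.im = 0)
    (htop : ∃ μ ∈ spectrum ℂ (Q.map (algebraMap ℝ ℂ)), 1 < μ.re)
    (r : Fin d → ℝ) (hr : ∀ i, 0 < r i) :
    ¬ ∃ z : Fin d → ℝ, (∀ i, 0 ≤ z i) ∧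
      ((1 : Matrix (Fin d) (Fin d) ℝ) - Q) *ᵥ z = r :=
  stmt_1_general d Q hQpos htop r hr
end

section
/- Let K ≥ 1, let Γ be a K×K matrix with nonnegative entries, g* ∈ R^K with nonzero entries, w ∈ R^K with strictly positive entries satisfying wᵀ D_{g*}² Γ = wᵀ, and λ* ∈ R satisfying λ* · 1 = g*^{⊙-1} + Γ(g* - 1). Then λ* = ⟨w, 2g* - 1⟩ / ⟨w, g*^{⊙2}⟩ ≤ 1, with equality if and only if g* = 1 (the all-ones vector). -/
/-!
Multiplying the `i`-th equation `λ* = 1 / gᵢ + (Γ(g - 1))ᵢ` by `wᵢ gᵢ²` and summing over `i`, the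
left eigenvector relation `wᵀ D_g² Γ = wᵀ` turns the `Γ`-term into `⟨w, g - 1⟩`, so that
`λ* ⟨w, g²⟩ = ⟨w, 2g - 1⟩`. Hence `(1 - λ*) ⟨w, g²⟩ = ⟨w, (g - 1)²⟩`, and positivity of `w` gives
`λ* ≤ 1` with equality exactly when `g = 1`.
-/

open Matrix

section WeightedSquares

variable {ι R : Type*} [Fintype ι] [CommRing R] [LinearOrder R] [IsStrictOrderedRing R]
  {w : ι → R}

theorem Matrix.dotProduct_sq_nonneg (hw : ∀ i, 0 < w i) (v : ι → R) :
    0 ≤ w ⬝ᵥ fun i => v i ^ 2 :=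
  Finset.sum_nonneg fun i _ => mul_nonneg (hw i).le (sq_nonneg (v i))

theorem Matrix.dotProduct_sq_eq_zero_iff (hw : ∀ i, 0 < w i) (v : ι → R) :
    (w ⬝ᵥ fun i => v i ^ 2) = 0 ↔ v = 0 := by
  rw [dotProduct, Finset.sum_eq_zero_iff_of_nonneg fun i _ => mul_nonneg (hw i).le (sq_nonneg _),
    funext_iff]
  simp [(hw _).ne']

end WeightedSquares

section EigenvalueIdentity

variable {ι F : Type*} [Fintype ι] [DecidableEq ι] [Field F]
  {Γ : Matrix ι ι F} {g w : ι → F} {lam : F}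

theorem mul_dotProduct_sq_eq_dotProduct_two_mul_sub_one (hg : ∀ i, g i ≠ 0)
    (hweig : w ᵥ* (diagonal (fun i => g i ^ 2) * Γ) = w)
    (hlam : ∀ i, lam = (g i)⁻¹ + (Γ *ᵥ fun j => g j - 1) i) :
    lam * (w ⬝ᵥ fun i => g i ^ 2) = w ⬝ᵥ fun i => 2 * g i - 1 := by
  have hweighted : (fun i => w i * g i ^ 2) = w ᵥ* diagonal (fun i => g i ^ 2) :=
    funext fun i => (vecMul_diagonal w (fun i => g i ^ 2) i).symm
  have hΓ : (fun i => w i * g i ^ 2) ⬝ᵥ (Γ *ᵥ fun j => g j - 1) = w ⬝ᵥ fun j => g j - 1 := by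
    rw [dotProduct_mulVec, hweighted, vecMul_vecMul, hweig]
  calc lam * (w ⬝ᵥ fun i => g i ^ 2)
      = ∑ i, (w i * g i + w i * g i ^ 2 * (Γ *ᵥ fun j => g j - 1) i) := by
        rw [dotProduct, Finset.mul_sum]
        refine Finset.sum_congr rfl fun i _ => ?_
        rw [hlam i]
        field_simp [hg i]
    _ = (w ⬝ᵥ g) + w ⬝ᵥ fun j => g j - 1 := by
        rw [Finset.sum_add_distrib, ← hΓ]
        rfl
    _ = w ⬝ᵥ fun i => 2 * g i - 1 := by
        simp only [dotProduct, ← Finset.sum_add_distrib]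
        exact Finset.sum_congr rfl fun i _ => by ring

end EigenvalueIdentity

theorem stmt_12_general (K : ℕ) (hK : 0 < K) (Γ : Matrix (Fin K) (Fin K) ℝ)
    (g : Fin K → ℝ) (hg : ∀ i, g i ≠ 0)
    (w : Fin K → ℝ) (hw : ∀ i, 0 < w i)
    (hweig : w ᵥ* (Matrix.diagonal (fun i => g i ^ 2) * Γ) = w)
    (lam : ℝ)
    (hlam : ∀ i, lam = (g i)⁻¹ + (Γ *ᵥ (fun j => g j - 1)) i) :
    lam = (w ⬝ᵥ fun i => 2 * g i - 1) / (w ⬝ᵥ fun i => g i ^ 2) ∧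
      lam ≤ 1 ∧ (lam = 1 ↔ g = fun _ => 1) := by
  set S := w ⬝ᵥ fun i => g i ^ 2
  have hS : 0 < S := by
    refine (dotProduct_sq_nonneg hw g).lt_of_ne' fun h => ?_
    exact hg ⟨0, hK⟩ (congrFun ((dotProduct_sq_eq_zero_iff hw g).mp h) _)
  have hkey := mul_dotProduct_sq_eq_dotProduct_two_mul_sub_one hg hweig hlam
  have hgap : (1 - lam) * S = w ⬝ᵥ fun i => (g i - 1) ^ 2 := by
    rw [sub_mul, one_mul, hkey]
    simp only [S, dotProduct, ← Finset.sum_sub_distrib]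
    exact Finset.sum_congr rfl fun i _ => by ring
  refine ⟨(eq_div_iff hS.ne').mpr hkey, ?_, ?_⟩
  · exact sub_nonneg.mp (nonneg_of_mul_nonneg_left (hgap ▸ dotProduct_sq_nonneg hw _) hS)
  · calc lam = 1 ↔ (1 - lam) * S = 0 := by
          rw [mul_eq_zero_iff_right hS.ne', sub_eq_zero, eq_comm]
      _ ↔ (fun i => g i - 1) = 0 := by rw [hgap, dotProduct_sq_eq_zero_iff hw]
      _ ↔ g = fun _ => 1 := by simp only [funext_iff, Pi.zero_apply, sub_eq_zero]

/-- If `Γ` has nonnegative entries, `g*` has nonzero entries, `w` is entrywise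
positive with `wᵀ D_{g*}² Γ = wᵀ`, and `λ* 1 = g*^{⊙-1} + Γ(g* - 1)`, then
`λ* = ⟨w, 2g* - 1⟩ / ⟨w, g*^{⊙2}⟩ ≤ 1`, with equality iff `g* = 1`. -/
theorem stmt_12 (K : ℕ) (hK : 0 < K) (Γ : Matrix (Fin K) (Fin K) ℝ)
    (hΓ : ∀ i j, 0 ≤ Γ i j)
    (g : Fin K → ℝ) (hg : ∀ i, g i ≠ 0)
    (w : Fin K → ℝ) (hw : ∀ i, 0 < w i)
    (hweig : w ᵥ* (Matrix.diagonal (fun i => g i ^ 2) * Γ) = w)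
    (lam : ℝ)
    (hlam : ∀ i, lam = (g i)⁻¹ + (Γ *ᵥ (fun j => g j - 1)) i) :
    lam = (w ⬝ᵥ fun i => 2 * g i - 1) / (w ⬝ᵥ fun i => g i ^ 2) ∧
      lam ≤ 1 ∧ (lam = 1 ↔ g = fun _ => 1) :=
  stmt_12_general K hK Γ g hg w hw hweig lam hlam
end

section
/- Let M be a K×K real matrix, diagonalizable with real eigenvalues φ₁ > φ₂ ≥ ... ≥ φ_K where φ₁ = 1 is simple, with right eigenvector v^r and left eigenvector v^l for the eigenvalue 1, normalized so that ⟨v^l, v^r⟩ = 1. Suppose M(ε) is a family of matrices depending differentiably on ε with M(0) = M, whose top eigenvalue φ₁(ε) is differentiable at 0 with derivative φ₁'(0) ≠ 0. Then lim_{ε→0⁺} ε (I - M(ε))^{-1} exists and equals (-1/φ₁'(0)) v^r (v^l)ᵀ, provided φ₁(ε) ≠ 1 for small ε > 0 and I - M(ε) is invertible for small ε > 0. -/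
/-!
Put `A(ε) = 1 - M(ε)`. Then `ε A(ε)⁻¹ = (ε / det A(ε)) • adj A(ε)`; since `det A(0) = 0`, the scalar
factor tends to `1 / (det ∘ A)'(0)`, while `adj A(ε) → adj A(0)`. As `φ(ε)` is an eigenvalue of
`M(ε)`, `det (φ(ε) - M(ε))` vanishes identically, and differentiating it by Jacobi's formula gives
`(det ∘ A)'(0) = -φ'(0) tr adj (1 - M)`. Finally, diagonalizing `M = P D P⁻¹` with the simple
eigenvalue `1` at index `i₀`, every cofactor of `1 - D` but the `(i₀, i₀)` one vanishes, so
`adj (1 - M) = c v^r (v^l)ᵀ` with `c = ∏_{i ≠ i₀} (1 - d_i) ≠ 0`, whence `tr adj (1 - M) = c`.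
-/

open Matrix Filter Topology Finset

namespace Matrix

variable {n : Type*} [Fintype n] [DecidableEq n]

section CommRing

variable {R : Type*} [CommRing R]

theorem adjugate_eq_det_smul_inv {A : Matrix n n R} (hA : IsUnit A.det) :
    adjugate A = A.det • A⁻¹ := by
  rw [inv_def, smul_smul, Ring.mul_inverse_cancel _ hA, one_smul]

theorem adjugate_conj {P : Matrix n n R} (hP : IsUnit P.det)
    (A : Matrix n n R) : adjugate (P * A * P⁻¹) = P * adjugate A * P⁻¹ := by
  rw [adjugate_mul_distrib, adjugate_mul_distrib, adjugate_eq_det_smul_inv hP,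
    adjugate_eq_det_smul_inv (isUnit_nonsing_inv_det P hP), nonsing_inv_nonsing_inv P hP]
  simp only [Matrix.mul_smul, Matrix.smul_mul, smul_smul, Matrix.mul_assoc]
  rw [mul_comm, det_nonsing_inv_mul_det P hP, one_smul]

theorem trace_adjugate_mul (A B : Matrix n n R) :
    (adjugate A * B).trace = ∑ i, (A.updateCol i fun k => B k i).det := by
  refine sum_congr rfl fun i _ => ?_
  rw [diag_apply, mul_apply, ← cramer_apply, cramer_eq_adjugate_mulVec]
  rfl

theorem det_updateCol_eq_sum (A : Matrix n n R) (i : n) (b : n → R) :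
    (A.updateCol i b).det =
      ∑ σ : Equiv.Perm n,
        (Equiv.Perm.sign σ : R) * ((∏ j ∈ univ.erase i, A (σ j) j) * b (σ i)) := by
  rw [det_apply']
  refine sum_congr rfl fun σ _ => ?_
  rw [← mul_prod_erase univ _ (mem_univ i), updateCol_self, mul_comm (b (σ i))]
  congr 2
  exact prod_congr rfl fun j hj => updateCol_ne (ne_of_mem_erase hj)

end CommRing

section Field

variable {K : Type*} [Field K]

theorem det_smul_one_sub_eq_zero_of_mem_spectrum {A : Matrix n n K} {μ : K}
    (h : μ ∈ spectrum K A) : (μ • 1 - A).det = 0 := by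
  rw [smul_one_eq_diagonal, ← scalar_apply, ← eval_charpoly]
  exact mem_spectrum_iff_isRoot_charpoly.mp h

theorem roots_charpoly_of_eq_conj_diagonal {M P : Matrix n n K} {d : n → K} (hP : IsUnit P.det)
    (hM : M = P * diagonal d * P⁻¹) : M.charpoly.roots = univ.val.map d := by
  have hPu : IsUnit P := (isUnit_iff_isUnit_det P).mpr hP
  rw [hM, ← hPu.unit_spec, charpoly_units_conj, charpoly_diagonal,
    Polynomial.roots_prod _ _ (prod_ne_zero_iff.mpr fun i _ => Polynomial.X_sub_C_ne_zero (d i))]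
  simp

theorem adjugate_one_sub_diagonal {d x y : n → K} {i₀ : n} (hd : ∀ i, d i = 1 ↔ i = i₀)
    (hx : diagonal d *ᵥ x = x) (hy : y ᵥ* diagonal d = y) (hxy : y ⬝ᵥ x = 1) :
    adjugate (1 - diagonal d) = (∏ j ∈ univ.erase i₀, (1 - d j)) • vecMulVec x y := by
  have hsupp {z : n → K} (hz : ∀ i, d i * z i = z i) (i : n) (hi : i ≠ i₀) : z i = 0 := by
    have : (d i - 1) * z i = 0 := by rw [sub_mul, hz, one_mul, sub_self]
    exact (mul_eq_zero.mp this).resolve_left (sub_ne_zero.mpr ((hd i).not.mpr hi))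
  have hx0 := hsupp fun i => by simpa only [mulVec_diagonal] using congrFun hx i
  have hy0 := hsupp fun i => by simpa only [vecMul_diagonal, mul_comm] using congrFun hy i
  have hxy0 : x i₀ * y i₀ = 1 := by
    rw [← hxy, dotProduct, sum_eq_single i₀ (fun i _ hi => by rw [hy0 i hi, zero_mul]) (by simp),
      mul_comm]
  rw [← diagonal_one, diagonal_sub, adjugate_diagonal]
  ext i j
  rw [smul_apply, vecMulVec_apply, diagonal_apply, smul_eq_mul]
  by_cases hij : i = j
  · subst hij
    by_cases hi : i = i₀
    · subst hi
      rw [if_pos rfl, hxy0, mul_one]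
    · rw [if_pos rfl, hx0 i hi, zero_mul, mul_zero]
      exact prod_eq_zero (mem_erase.mpr ⟨Ne.symm hi, mem_univ _⟩)
        (by rw [(hd i₀).mpr rfl, sub_self])
  · rw [if_neg hij]
    by_cases hi : i = i₀
    · subst hi
      rw [hy0 j (Ne.symm hij), mul_zero, mul_zero]
    · rw [hx0 i hi, zero_mul, mul_zero]

theorem exists_adjugate_one_sub_eq_smul_vecMulVec [DecidableEq K] {M P : Matrix n n K} {d : n → K}
    (hP : IsUnit P.det) (hM : M = P * diagonal d * P⁻¹) (hsimple : M.charpoly.roots.count 1 = 1)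
    {vr vl : n → K} (hvr : M *ᵥ vr = vr) (hvl : vl ᵥ* M = vl) (hbi : vl ⬝ᵥ vr = 1) :
    ∃ c : K, c ≠ 0 ∧ adjugate (1 - M) = c • vecMulVec vr vl := by
  obtain ⟨i₀, hi₀⟩ : ∃ i₀, ∀ i, d i = 1 ↔ i = i₀ := by
    rw [roots_charpoly_of_eq_conj_diagonal hP hM, Multiset.count_map] at hsimple
    obtain ⟨i₀, h⟩ := card_eq_one.mp (show #(univ.filter fun i => 1 = d i) = 1 from hsimple)
    exact ⟨i₀, fun i => by simpa [eq_comm] using Finset.ext_iff.mp h i⟩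
  have hPP : P * P⁻¹ = 1 := mul_nonsing_inv P hP
  have hD : diagonal d = P⁻¹ * M * P := by
    rw [hM, ← Matrix.mul_assoc, ← Matrix.mul_assoc, nonsing_inv_mul P hP, one_mul, Matrix.mul_assoc,
      nonsing_inv_mul P hP, mul_one]
  have hx : diagonal d *ᵥ (P⁻¹ *ᵥ vr) = P⁻¹ *ᵥ vr := by
    rw [hD, mulVec_mulVec, Matrix.mul_assoc (P⁻¹ * M), hPP, mul_one, ← mulVec_mulVec, hvr]
  have hy : (vl ᵥ* P) ᵥ* diagonal d = vl ᵥ* P := by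
    rw [hD, vecMul_vecMul, ← Matrix.mul_assoc, ← Matrix.mul_assoc, hPP, one_mul, ← vecMul_vecMul,
      hvl]
  have hxy : (vl ᵥ* P) ⬝ᵥ (P⁻¹ *ᵥ vr) = 1 := by
    rw [← dotProduct_mulVec, mulVec_mulVec, hPP, one_mulVec, hbi]
  refine ⟨(∏ j ∈ univ.erase i₀, (1 - d j)), prod_ne_zero_iff.mpr fun j hj =>
    sub_ne_zero.mpr fun h => ne_of_mem_erase hj ((hi₀ j).mp h.symm), ?_⟩
  have h1M : 1 - M = P * (1 - diagonal d) * P⁻¹ := by rw [hM, mul_sub, sub_mul, mul_one, hPP]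
  rw [h1M, adjugate_conj hP, adjugate_one_sub_diagonal hi₀ hx hy hxy, Matrix.mul_smul,
    Matrix.smul_mul, mul_vecMulVec, vecMulVec_mul, mulVec_mulVec, hPP, one_mulVec, vecMul_vecMul,
    hPP, vecMul_one]

end Field

section Calculus

variable {𝕜 : Type*} [NontriviallyNormedField 𝕜]

theorem hasDerivAt_det {A : 𝕜 → Matrix n n 𝕜} {A' : Matrix n n 𝕜} {t : 𝕜}
    (hA : ∀ i j, HasDerivAt (fun s => A s i j) (A' i j) t) :
    HasDerivAt (fun s => (A s).det) (adjugate (A t) * A').trace t := by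
  have hterm (σ : Equiv.Perm n) : HasDerivAt (fun s => ∏ i, A s (σ i) i)
      (∑ i, (∏ j ∈ univ.erase i, A t (σ j) j) * A' (σ i) i) t := by
    simpa only [smul_eq_mul] using HasDerivAt.fun_finsetProd fun i _ => hA (σ i) i
  rw [show (fun s => (A s).det) =
      fun s => ∑ σ : Equiv.Perm n, (Equiv.Perm.sign σ : 𝕜) * ∏ i, A s (σ i) i
    from funext fun s => det_apply' _]
  refine (HasDerivAt.fun_sum fun σ _ => (hterm σ).const_mul (Equiv.Perm.sign σ : 𝕜)).congr_deriv ?_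
  simp only [trace_adjugate_mul, det_updateCol_eq_sum, mul_sum]
  exact sum_comm

theorem hasDerivAt_det_smul_one_sub_of_mem_spectrum {A : 𝕜 → Matrix n n 𝕜} {A' : Matrix n n 𝕜}
    {lam : 𝕜 → 𝕜} {lam' t : 𝕜} (hA : ∀ i j, HasDerivAt (fun s => A s i j) (A' i j) t)
    (hlam : HasDerivAt lam lam' t) (hspec : ∀ s, lam s ∈ spectrum 𝕜 (A s)) :
    HasDerivAt (fun s => (lam t • 1 - A s).det)
      (-(lam' * (adjugate (lam t • 1 - A t)).trace)) t := by
  set N := adjugate (lam t • 1 - A t)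
  have hmoving : HasDerivAt (fun s => (lam s • 1 - A s).det) (N * (lam' • 1 - A')).trace t :=
    hasDerivAt_det fun i j => by
      simpa only [sub_apply, smul_apply, smul_eq_mul] using (hlam.mul_const _).fun_sub (hA i j)
  have hzero : (N * (lam' • 1 - A')).trace = 0 := by
    refine hmoving.unique ?_
    simp only [fun s => det_smul_one_sub_eq_zero_of_mem_spectrum (hspec s)]
    exact hasDerivAt_const _ _
  refine (hasDerivAt_det (A' := -A') fun i j => ?_).congr_deriv ?_
  · simpa only [sub_apply, neg_apply, zero_sub] using (hasDerivAt_const t _).fun_sub (hA i j)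
  · rw [mul_sub, trace_sub, Matrix.mul_smul, mul_one, trace_smul, smul_eq_mul, sub_eq_zero] at hzero
    rw [mul_neg, trace_neg, hzero]

theorem tendsto_smul_inv_of_hasDerivAt_det {A : 𝕜 → Matrix n n 𝕜} {D : 𝕜}
    (hA : ∀ i j, ContinuousAt (fun s => A s i j) 0) (h0 : (A 0).det = 0)
    (hD : HasDerivAt (fun s => (A s).det) D 0) (hD0 : D ≠ 0) :
    Tendsto (fun s => s • (A s)⁻¹) (𝓝[≠] 0) (𝓝 (D⁻¹ • adjugate (A 0))) := by
  have hslope : Tendsto (fun s => (A s).det / s) (𝓝[≠] 0) (𝓝 D) := by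
    simpa [h0, div_eq_inv_mul] using hD.tendsto_slope_zero
  have hadj : Tendsto (fun s => adjugate (A s)) (𝓝[≠] 0) (𝓝 (adjugate (A 0))) :=
    ((continuous_id.matrix_adjugate.tendsto _).comp
      (tendsto_pi_nhds.2 fun i => tendsto_pi_nhds.2 fun j => hA i j)).mono_left nhdsWithin_le_nhds
  refine ((hslope.inv₀ hD0).smul hadj).congr fun s => ?_
  rw [inv_def, Ring.inverse_eq_inv', smul_smul, inv_div, div_eq_mul_inv]

end Calculus

end Matrix

theorem stmt_17_general (K : ℕ) (M : Matrix (Fin K) (Fin K) ℝ)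
    (hdiag : ∃ (P : Matrix (Fin K) (Fin K) ℝ) (d : Fin K → ℝ),
      IsUnit P.det ∧ M = P * Matrix.diagonal d * P⁻¹)
    (hsimple : Multiset.count 1 M.charpoly.roots = 1)
    (vr vl : Fin K → ℝ)
    (hvr : M *ᵥ vr = vr) (hvl : vl ᵥ* M = vl) (hbi : vl ⬝ᵥ vr = 1)
    (Mf : ℝ → Matrix (Fin K) (Fin K) ℝ) (hM0 : Mf 0 = M)
    (hMdiff : ∀ i j, DifferentiableAt ℝ (fun ε => Mf ε i j) 0)
    (φ : ℝ → ℝ) (hφ0 : φ 0 = 1)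
    (hφtop : ∀ ε, φ ε ∈ spectrum ℝ (Mf ε) ∧ ∀ μ ∈ spectrum ℝ (Mf ε), μ ≤ φ ε)
    (φ' : ℝ) (hφ' : HasDerivAt φ φ' 0) (hφ'0 : φ' ≠ 0) :
    Tendsto (fun ε => ε • ((1 : Matrix (Fin K) (Fin K) ℝ) - Mf ε)⁻¹)
      (nhdsWithin 0 (Set.Ioi 0))
      (nhds ((-1 / φ') • Matrix.vecMulVec vr vl)) := by
  obtain ⟨P, d, hP, hMP⟩ := hdiag
  obtain ⟨c, hc, hN⟩ := exists_adjugate_one_sub_eq_smul_vecMulVec hP hMP hsimple hvr hvl hbi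
  have htrace : (adjugate (1 - M)).trace = c := by
    rw [hN, trace_smul, trace_vecMulVec, dotProduct_comm, hbi, smul_eq_mul, mul_one]
  have hdet : HasDerivAt (fun ε => (1 - Mf ε).det) (-(φ' * c)) 0 := by
    simpa only [hφ0, one_smul, hM0, htrace] using
      hasDerivAt_det_smul_one_sub_of_mem_spectrum (fun i j => (hMdiff i j).hasDerivAt) hφ'
        fun ε => (hφtop ε).1
  have hdet0 : (1 - Mf 0).det = 0 := by
    simpa only [hφ0, one_smul] using det_smul_one_sub_eq_zero_of_mem_spectrum (hφtop 0).1
  have hcont (i j : Fin K) : ContinuousAt (fun ε => (1 - Mf ε) i j) 0 := by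
    simpa only [Matrix.sub_apply] using continuousAt_const.fun_sub (hMdiff i j).continuousAt
  have hlim := tendsto_smul_inv_of_hasDerivAt_det hcont hdet0 hdet
    (neg_ne_zero.mpr (mul_ne_zero hφ'0 hc))
  rw [hM0, hN, smul_smul] at hlim
  convert hlim.mono_left (nhdsGT_le_nhdsNE 0) using 3
  field_simp

/-- If `M` is diagonalizable with real eigenvalues, its top eigenvalue `1` is
simple with biorthogonal right/left eigenvectors `v^r, v^l` (`⟨v^l, v^r⟩ = 1`),
and `M(ε)` is a differentiable family with `M(0) = M` whose top eigenvalue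
`φ₁(ε)` is differentiable at `0` with `φ₁'(0) ≠ 0`, then (provided
`φ₁(ε) ≠ 1` and `I - M(ε)` is invertible for small `ε > 0`)
`ε (I - M(ε))⁻¹ → (-1/φ₁'(0)) v^r (v^l)ᵀ` as `ε → 0⁺`. -/
theorem stmt_17 (K : ℕ) (M : Matrix (Fin K) (Fin K) ℝ)
    (hdiag : ∃ (P : Matrix (Fin K) (Fin K) ℝ) (d : Fin K → ℝ),
      IsUnit P.det ∧ M = P * Matrix.diagonal d * P⁻¹)
    (hsimple : Multiset.count 1 M.charpoly.roots = 1)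
    (htop : ∀ μ ∈ spectrum ℝ M, μ ≤ 1)
    (vr vl : Fin K → ℝ)
    (hvr : M *ᵥ vr = vr) (hvl : vl ᵥ* M = vl) (hbi : vl ⬝ᵥ vr = 1)
    (Mf : ℝ → Matrix (Fin K) (Fin K) ℝ) (hM0 : Mf 0 = M)
    (hMdiff : ∀ i j, DifferentiableAt ℝ (fun ε => Mf ε i j) 0)
    (φ : ℝ → ℝ) (hφ0 : φ 0 = 1)
    (hφtop : ∀ ε, φ ε ∈ spectrum ℝ (Mf ε) ∧ ∀ μ ∈ spectrum ℝ (Mf ε), μ ≤ φ ε)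
    (φ' : ℝ) (hφ' : HasDerivAt φ φ' 0) (hφ'0 : φ' ≠ 0)
    (hreg : ∀ᶠ ε in nhdsWithin 0 (Set.Ioi 0),
      φ ε ≠ 1 ∧ IsUnit ((1 : Matrix (Fin K) (Fin K) ℝ) - Mf ε)) :
    Tendsto (fun ε => ε • ((1 : Matrix (Fin K) (Fin K) ℝ) - Mf ε)⁻¹)
      (nhdsWithin 0 (Set.Ioi 0))
      (nhds ((-1 / φ') • Matrix.vecMulVec vr vl)) :=
  stmt_17_general K M hdiag hsimple vr vl hvr hvl hbi Mf hM0 hMdiff φ hφ0 hφtop φ' hφ' hφ'0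
end
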